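/- arXiv:1605.05883 — 7 statements merged into one kernel-verified Lean document; each statement's English description precedes it below -/
import Mathlib

section
/- Let v : ℝ≥0 → ℝ be C¹ with v'(ρ) < 0 for ρ > 0, and let R > 0. Suppose x₁ < x₂ < ... < x_{n-1} solve the follow-the-leader ODE system ẋᵢ(t) = v(ℓ/(x_{i+1}(t) − xᵢ(t))) for i = 1,...,n−2 and ẋ_{n-1}(t) = v(0), with initial gaps satisfying x_{i+1}(0) − xᵢ(0) ≥ ℓ/R for all i. Then for all t ≥ 0 and all i ∈ {1,...,n−2}, x_{i+1}(t) − xᵢ(t) ≥ ℓ/R (discrete maximum principle). -/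
/-!
Each gap `gᵢ = x_{i+1} - xᵢ` obeys `ġᵢ = v(ℓ/g_{i+1}) - v(ℓ/gᵢ)` (with `v 0` in place of
`v(ℓ/g_{i+1})` for the last gap). Since `v` is decreasing, `ġᵢ ≥ 0` as soon as `gᵢ` has dropped
below `ℓ/R` while `g_{i+1}` has not, so a barrier argument propagates the bound `gᵢ ≥ ℓ/R`
from the leader backwards through the platoon.
-/

open Set

lemma le_of_hasDerivAt_nonneg_of_lt {f f' : ℝ → ℝ} {a c : ℝ}
    (hf : ∀ t ≥ a, HasDerivAt f (f' t) t) (ha : c ≤ f a)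
    (hf' : ∀ t ≥ a, f t < c → 0 ≤ f' t) {t : ℝ} (ht : a ≤ t) : c ≤ f t := by
  by_contra! hlt
  have hcont : ContinuousOn f (Icc a t) := fun s hs => (hf s hs.1).continuousAt.continuousWithinAt
  -- After the last time `sSup S` at which `f ≥ c`, `f` stays below `c`, hence increases.
  set S := Icc a t ∩ f ⁻¹' Ici c
  have hS : IsCompact S :=
    isCompact_Icc.of_isClosed_subset (hcont.preimage_isClosed_of_isClosed isClosed_Icc isClosed_Ici)
      inter_subset_left
  obtain ⟨⟨has, hst⟩, hcs : c ≤ f (sSup S)⟩ : sSup S ∈ S := hS.sSup_mem ⟨a, ⟨le_rfl, ht⟩, ha⟩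
  have hbelow : ∀ u ∈ Ioo (sSup S) t, f u < c := fun u hu => by
    by_contra! hcu
    exact hu.1.not_ge (le_csSup hS.bddAbove ⟨⟨has.trans hu.1.le, hu.2.le⟩, hcu⟩)
  have hmono : MonotoneOn f (Icc (sSup S) t) := by
    refine monotoneOn_of_deriv_nonneg (convex_Icc _ _) (hcont.mono (Icc_subset_Icc_left has))
      (fun u hu => ?_) (fun u hu => ?_) <;> rw [interior_Icc] at hu
    · exact (hf u (has.trans hu.1.le)).differentiableAt.differentiableWithinAt
    · rw [(hf u (has.trans hu.1.le)).deriv]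
      exact hf' u (has.trans hu.1.le) (hbelow u hu)
  linarith [hmono ⟨le_rfl, hst⟩ ⟨hst, le_rfl⟩ hst]

lemma AntitoneOn.apply_div_le_apply_div {v : ℝ → ℝ} (hv : AntitoneOn v (Ici 0)) {ℓ g h : ℝ}
    (hℓ : 0 ≤ ℓ) (hg : 0 < g) (hgh : g ≤ h) : v (ℓ / g) ≤ v (ℓ / h) :=
  hv (div_nonneg hℓ (hg.trans_le hgh).le) (div_nonneg hℓ hg.le) (div_le_div_of_nonneg_left hℓ hg hgh)

theorem ftl_discrete_maximum_principle_general
    (v : ℝ → ℝ) (hv : ContDiffOn ℝ 1 v (Set.Ici 0))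
    (hv' : ∀ ρ : ℝ, 0 < ρ → deriv v ρ < 0)
    (R ℓ : ℝ) (hℓ : 0 < ℓ)
    (n : ℕ)
    (x : ℕ → ℝ → ℝ)
    (horder : ∀ t ≥ (0:ℝ), ∀ i, 1 ≤ i → i ≤ n - 2 → x i t < x (i+1) t)
    (hode : ∀ t ≥ (0:ℝ), ∀ i, 1 ≤ i → i ≤ n - 2 →
      HasDerivAt (x i) (v (ℓ / (x (i+1) t - x i t))) t)
    (hlead : ∀ t ≥ (0:ℝ), HasDerivAt (x (n-1)) (v 0) t)
    (hinit : ∀ i, 1 ≤ i → i ≤ n - 2 → x (i+1) 0 - x i 0 ≥ ℓ / R) :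
    ∀ t ≥ (0:ℝ), ∀ i, 1 ≤ i → i ≤ n - 2 → x (i+1) t - x i t ≥ ℓ / R := by
  have hanti : AntitoneOn v (Ici 0) :=
    (strictAntiOn_of_deriv_neg (convex_Ici 0) hv.continuousOn fun ρ hρ =>
      hv' ρ (by simpa using hρ)).antitoneOn
  have hgap : ∀ t ≥ (0:ℝ), ∀ i, 1 ≤ i → i ≤ n - 2 → 0 < x (i+1) t - x i t :=
    fun t ht i hi hin => sub_pos.2 (horder t ht i hi hin)
  suffices h : ∀ i, 1 ≤ i → i ≤ n - 2 → ∀ t ≥ (0:ℝ), x (i+1) t - x i t ≥ ℓ / R from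
    fun t ht i hi hin => h i hi hin t ht
  intro i hi hin
  refine Nat.decreasingInduction' (P := fun k => ∀ t ≥ (0:ℝ), x (k+1) t - x k t ≥ ℓ / R)
    (fun k hk hik ih t ht => ?_) hin (fun t ht => ?_)
  · have hk1 : 1 ≤ k := hi.trans hik
    refine le_of_hasDerivAt_nonneg_of_lt (f := fun s => x (k+1) s - x k s)
      (fun s hs => (hode s hs (k+1) (by omega) hk).sub (hode s hs k hk1 hk.le))
      (hinit k hk1 hk.le) (fun s hs hlt => ?_) ht
    exact sub_nonneg.2 <|
      hanti.apply_div_le_apply_div hℓ.le (hgap s hs k hk1 hk.le) (hlt.le.trans (ih s hs))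
  · have hlast : n - 2 + 1 = n - 1 := by omega
    have hn1 : 1 ≤ n - 2 := hi.trans hin
    refine le_of_hasDerivAt_nonneg_of_lt (f := fun s => x (n-2+1) s - x (n-2) s)
      (fun s hs => (hlast ▸ hlead s hs).sub (hode s hs (n-2) hn1 le_rfl))
      (hinit _ hn1 le_rfl) (fun s hs _ => ?_) ht
    have hρ : 0 ≤ ℓ / (x (n-2+1) s - x (n-2) s) := div_nonneg hℓ.le (hgap s hs _ hn1 le_rfl).le
    exact sub_nonneg.2 (hanti self_mem_Ici hρ hρ)

/-- Discrete maximum principle for the follow-the-leader system. -/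
theorem ftl_discrete_maximum_principle
    (v : ℝ → ℝ) (hv : ContDiffOn ℝ 1 v (Set.Ici 0))
    (hv' : ∀ ρ : ℝ, 0 < ρ → deriv v ρ < 0)
    (R ℓ : ℝ) (hR : 0 < R) (hℓ : 0 < ℓ)
    (n : ℕ) (hn : 3 ≤ n)
    (x : ℕ → ℝ → ℝ)
    (horder : ∀ t ≥ (0:ℝ), ∀ i, 1 ≤ i → i ≤ n - 2 → x i t < x (i+1) t)
    (hode : ∀ t ≥ (0:ℝ), ∀ i, 1 ≤ i → i ≤ n - 2 →
      HasDerivAt (x i) (v (ℓ / (x (i+1) t - x i t))) t)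
    (hlead : ∀ t ≥ (0:ℝ), HasDerivAt (x (n-1)) (v 0) t)
    (hinit : ∀ i, 1 ≤ i → i ≤ n - 2 → x (i+1) 0 - x i 0 ≥ ℓ / R) :
    ∀ t ≥ (0:ℝ), ∀ i, 1 ≤ i → i ≤ n - 2 → x (i+1) t - x i t ≥ ℓ / R :=
  ftl_discrete_maximum_principle_general v hv hv' R ℓ hℓ n x horder hode hlead hinit
end

section
/- Assume v : ℝ≥0 → ℝ is C¹ with v' < 0 on (0,∞). Let Rᵢ(t), i = 1,...,n−2, be positive C¹ functions solving Ṙᵢ = −(Rᵢ²/ℓ)[v(R_{i+1}) − v(Rᵢ)] for i ≤ n−3 and Ṙ_{n−2} = −(R_{n−2}²/ℓ)[v(0) − v(R_{n−2})]. Define the discrete total variation T(t) = R₁(t) + R_{n−2}(t) + Σ_{i=1}^{n−3} |Rᵢ(t) − R_{i+1}(t)|. Then T is non-increasing in t. -/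
/-!
Where `Rᵢ ≠ R_{i+1}`, the term `|Rᵢ - R_{i+1}|` has derivative `sign(Rᵢ - R_{i+1}) (Ṙᵢ - Ṙ_{i+1})`,
and since `v` is decreasing the ODE gives `sign Ṙᵢ = -sign(Rᵢ - R_{i+1})`, so this is
`-|Ṙᵢ| - sign(Rᵢ - R_{i+1}) Ṙ_{i+1} ≤ |Ṙ_{i+1}| - |Ṙᵢ|`; where `Rᵢ = R_{i+1}` we have `Ṙᵢ = 0` and
the right derivative is `|Ṙ_{i+1}|`. The bounds telescope, so the right derivative of `T` is at
most `Ṙ₁ - |Ṙ₁| + Ṙ_{n-2} + |Ṙ_{n-2}| ≤ 0`, using `Ṙ_{n-2} ≤ 0` because `v(0) > v(R_{n-2})`.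
A continuous function with nonpositive right derivative is non-increasing.
-/

open Set

noncomputable section

theorem StrictAntiOn.sign_sub {α β : Type*} [AddCommGroup α] [LinearOrder α]
    [IsOrderedAddMonoid α] [AddCommGroup β] [LinearOrder β] [IsOrderedAddMonoid β]
    {s : Set α} {v : α → β} {x y : α}
    (hv : StrictAntiOn v s) (hx : x ∈ s) (hy : y ∈ s) :
    SignType.sign (v x - v y) = SignType.sign (y - x) := by
  rcases lt_trichotomy x y with hxy | rfl | hxy
  · rw [sign_pos (sub_pos.2 (hv hx hy hxy)), sign_pos (sub_pos.2 hxy)]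
  · simp
  · rw [sign_neg (sub_neg.2 (hv hy hx hxy)), sign_neg (sub_neg.2 hxy)]

/-- The right derivative of `t ↦ |g t|` at a point where `g = y` and `g' = y'`. -/
def absRightDeriv (y y' : ℝ) : ℝ := if y = 0 then |y'| else SignType.sign y * y'

theorem HasDerivWithinAt.abs_Ici_of_eq_zero {g : ℝ → ℝ} {g' x : ℝ}
    (hg : HasDerivWithinAt g g' (Ici x) x) (hx : g x = 0) :
    HasDerivWithinAt (fun y => |g y|) |g'| (Ici x) x := by
  rw [hasDerivWithinAt_iff_isLittleO] at hg ⊢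
  refine Asymptotics.IsBigO.trans_isLittleO (Asymptotics.IsBigO.of_bound 1 ?_) hg
  filter_upwards [self_mem_nhdsWithin] with y (hy : x ≤ y)
  simp only [hx, abs_zero, sub_zero, one_mul, Real.norm_eq_abs, smul_eq_mul]
  calc |(|g y| - (y - x) * |g'|)|
      = |(|g y| - |(y - x) * g'|)| := by rw [abs_mul, abs_of_nonneg (sub_nonneg.2 hy)]
    _ ≤ |g y - (y - x) * g'| := abs_abs_sub_abs_le_abs_sub _ _

theorem HasDerivAt.abs_Ici {g : ℝ → ℝ} {g' x : ℝ} (hg : HasDerivAt g g' x) :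
    HasDerivWithinAt (fun y => |g y|) (absRightDeriv (g x) g') (Ici x) x := by
  unfold absRightDeriv
  split_ifs with hx
  · exact hg.hasDerivWithinAt.abs_Ici_of_eq_zero hx
  · exact ((hasDerivAt_abs hx).comp x hg).hasDerivWithinAt

theorem absRightDeriv_sub_le {y a b : ℝ} (h : SignType.sign a = -SignType.sign y) :
    absRightDeriv y (a - b) ≤ |b| - |a| := by
  unfold absRightDeriv
  split_ifs with hy
  · rw [hy, sign_zero, neg_zero, sign_eq_zero_iff] at h
    simp [h]
  · rcases lt_or_gt_of_ne hy with hy_neg | hy_pos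
    · rw [sign_neg hy_neg, neg_neg, sign_eq_one_iff] at h
      rw [sign_neg hy_neg, abs_of_pos h, SignType.coe_neg, SignType.coe_one]
      linarith [le_abs_self b]
    · rw [sign_pos hy_pos, sign_eq_neg_one_iff] at h
      rw [sign_pos hy_pos, abs_of_neg h, SignType.coe_one]
      linarith [neg_abs_le b]

theorem antitoneOn_Ici_of_hasDerivWithinAt_nonpos {f f' : ℝ → ℝ} {a : ℝ}
    (hf : ContinuousOn f (Ici a)) (hf' : ∀ x ∈ Ici a, HasDerivWithinAt f (f' x) (Ici x) x)
    (hf'_nonpos : ∀ x ∈ Ici a, f' x ≤ 0) : AntitoneOn f (Ici a) := by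
  intro s hs t ht hst
  have hsub : Icc s t ⊆ Ici a := fun x hx => le_trans hs hx.1
  exact image_le_of_deriv_right_le_deriv_boundary (B := fun _ => f s) (hf.mono hsub)
    (fun x hx => hf' x (hsub (Ico_subset_Icc_self hx))) le_rfl continuousOn_const
    (fun x _ => hasDerivWithinAt_const x _ (f s))
    (fun x hx => hf'_nonpos x (hsub (Ico_subset_Icc_self hx))) (right_mem_Icc.2 hst)

/-- For positive `R`, the total variation of the sequence `0, R 1 t, …, R (m + 1) t, 0`. -/
def discreteTV (R : ℕ → ℝ → ℝ) (m : ℕ) (t : ℝ) : ℝ :=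
  R 1 t + R (m + 1) t + ∑ i ∈ Finset.Icc 1 m, |R i t - R (i + 1) t|

section discreteTV

variable {R : ℕ → ℝ → ℝ} {m : ℕ} {x : ℝ}

theorem continuousAt_discreteTV (hR : ∀ i ∈ Finset.Icc 1 (m + 1), ContinuousAt (R i) x) :
    ContinuousAt (discreteTV R m) x := by
  have hR' : ∀ i ∈ Finset.Icc 1 m, ContinuousAt (R i) x ∧ ContinuousAt (R (i + 1)) x :=
    fun i hi => by
      rw [Finset.mem_Icc] at hi
      exact ⟨hR i (by simp; omega), hR (i + 1) (by simp; omega)⟩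
  exact ((hR 1 (by simp)).add (hR (m + 1) (by simp))).add
    (tendsto_finsetSum _ fun i hi => ((hR' i hi).1.sub (hR' i hi).2).abs)

theorem hasDerivWithinAt_discreteTV {R' : ℕ → ℝ}
    (hR : ∀ i ∈ Finset.Icc 1 (m + 1), HasDerivAt (R i) (R' i) x) :
    HasDerivWithinAt (discreteTV R m) (R' 1 + R' (m + 1) + ∑ i ∈ Finset.Icc 1 m,
      absRightDeriv (R i x - R (i + 1) x) (R' i - R' (i + 1))) (Ici x) x := by
  have hR' : ∀ i ∈ Finset.Icc 1 m,
      HasDerivAt (fun t => R i t - R (i + 1) t) (R' i - R' (i + 1)) x := fun i hi => by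
    rw [Finset.mem_Icc] at hi
    exact (hR i (by simp; omega)).sub (hR (i + 1) (by simp; omega))
  exact (((hR 1 (by simp)).add (hR (m + 1) (by simp))).hasDerivWithinAt).add
    (HasDerivWithinAt.fun_sum fun i hi => (hR' i hi).abs_Ici)

end discreteTV

theorem discreteTV_rightDeriv_nonpos {r a : ℕ → ℝ} {m : ℕ}
    (hsign : ∀ i ∈ Finset.Icc 1 m, SignType.sign (a i) = -SignType.sign (r i - r (i + 1)))
    (hlast : a (m + 1) ≤ 0) :
    a 1 + a (m + 1) + ∑ i ∈ Finset.Icc 1 m, absRightDeriv (r i - r (i + 1)) (a i - a (i + 1))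
      ≤ 0 := by
  have hsum : ∑ i ∈ Finset.Icc 1 m, absRightDeriv (r i - r (i + 1)) (a i - a (i + 1))
      ≤ |a (m + 1)| - |a 1| := by
    calc _ ≤ ∑ i ∈ Finset.Icc 1 m, (|a (i + 1)| - |a i|) :=
          Finset.sum_le_sum fun i hi => absRightDeriv_sub_le (hsign i hi)
      _ = |a (m + 1)| - |a 1| := by
          rw [← Finset.Ico_add_one_right_eq_Icc, Finset.sum_Ico_sub (fun i => |a i|) (by omega)]
  linarith [le_abs_self (a 1), abs_of_nonpos hlast]

section FollowTheLeader

variable {v : ℝ → ℝ} {ℓ : ℝ}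

theorem sign_ftl_rhs (hv : StrictAntiOn v (Ici 0)) (hℓ : 0 < ℓ) {r q : ℝ} (hr : 0 < r)
    (hq : 0 ≤ q) : SignType.sign (-r ^ 2 / ℓ * (v q - v r)) = -SignType.sign (r - q) := by
  have hcoef : -r ^ 2 / ℓ < 0 := div_neg_of_neg_of_pos (neg_neg_of_pos (by positivity)) hℓ
  rw [sign_mul, sign_neg hcoef, hv.sign_sub hq hr.le, neg_one_mul]

theorem ftl_rhs_last_nonpos (hv : StrictAntiOn v (Ici 0)) (hℓ : 0 < ℓ) {r : ℝ} (hr : 0 < r) :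
    -r ^ 2 / ℓ * (v 0 - v r) ≤ 0 := by
  have h := sign_ftl_rhs hv hℓ hr le_rfl
  rw [sub_zero, sign_pos hr] at h
  exact (sign_eq_neg_one_iff.1 h).le

theorem antitoneOn_discreteTV_of_ftl (hv : StrictAntiOn v (Ici 0)) (hℓ : 0 < ℓ)
    {R : ℕ → ℝ → ℝ} {m : ℕ}
    (hpos : ∀ t ≥ (0:ℝ), ∀ i, 1 ≤ i → i ≤ m + 1 → 0 < R i t)
    (hode : ∀ t ≥ (0:ℝ), ∀ i, 1 ≤ i → i ≤ m →
      HasDerivAt (R i) (-(R i t)^2 / ℓ * (v (R (i+1) t) - v (R i t))) t)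
    (hlast : ∀ t ≥ (0:ℝ),
      HasDerivAt (R (m + 1)) (-(R (m + 1) t)^2 / ℓ * (v 0 - v (R (m + 1) t))) t) :
    AntitoneOn (discreteTV R m) (Ici 0) := by
  have hderiv : ∀ x ≥ (0:ℝ), ∀ i ∈ Finset.Icc 1 (m + 1), HasDerivAt (R i) (deriv (R i) x) x := by
    intro x hx i hi
    rw [Finset.mem_Icc] at hi
    rcases (show i ≤ m ∨ i = m + 1 by omega) with hi_le | rfl
    · exact (hode x hx i hi.1 hi_le).differentiableAt.hasDerivAt
    · exact (hlast x hx).differentiableAt.hasDerivAt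
  refine antitoneOn_Ici_of_hasDerivWithinAt_nonpos
    (fun x hx => (continuousAt_discreteTV fun i hi =>
      (hderiv x hx i hi).continuousAt).continuousWithinAt)
    (fun x hx => hasDerivWithinAt_discreteTV (hderiv x hx))
    (fun x (hx : 0 ≤ x) => discreteTV_rightDeriv_nonpos (r := fun i => R i x)
      (a := fun i => deriv (R i) x) (fun i hi => ?_) ?_)
  · rw [Finset.mem_Icc] at hi
    rw [(hode x hx i hi.1 hi.2).deriv]
    exact sign_ftl_rhs hv hℓ (hpos x hx i hi.1 (by omega))
      (hpos x hx (i + 1) (by omega) (by omega)).le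
  · rw [(hlast x hx).deriv]
    exact ftl_rhs_last_nonpos hv hℓ (hpos x hx (m + 1) (by omega) le_rfl)

end FollowTheLeader

theorem ftl_discrete_BV_contraction_general
    (v : ℝ → ℝ) (hv : ContDiffOn ℝ 1 v (Set.Ici 0))
    (hv' : ∀ ρ : ℝ, 0 < ρ → deriv v ρ < 0)
    (ℓ : ℝ) (hℓ : 0 < ℓ) (n : ℕ) (hn : 3 ≤ n)
    (Rd : ℕ → ℝ → ℝ)
    (hpos : ∀ t ≥ (0:ℝ), ∀ i, 1 ≤ i → i ≤ n - 2 → 0 < Rd i t)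
    (hode : ∀ t ≥ (0:ℝ), ∀ i, 1 ≤ i → i ≤ n - 3 →
      HasDerivAt (Rd i) (-(Rd i t)^2 / ℓ * (v (Rd (i+1) t) - v (Rd i t))) t)
    (hlast : ∀ t ≥ (0:ℝ),
      HasDerivAt (Rd (n-2)) (-(Rd (n-2) t)^2 / ℓ * (v 0 - v (Rd (n-2) t))) t)
    (T : ℝ → ℝ)
    (hT : ∀ t, T t = Rd 1 t + Rd (n-2) t
      + ∑ i ∈ Finset.Icc 1 (n-3), |Rd i t - Rd (i+1) t|) :
    ∀ s t : ℝ, 0 ≤ s → s ≤ t → T t ≤ T s := by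
  have hv_anti : StrictAntiOn v (Ici 0) :=
    strictAntiOn_of_deriv_neg (convex_Ici 0) hv.continuousOn
      fun x hx => hv' x (by rwa [interior_Ici] at hx)
  obtain ⟨m, rfl⟩ : ∃ m, n = m + 3 := ⟨n - 3, by omega⟩
  rw [show T = discreteTV Rd m from funext hT]
  exact fun s t hs hst =>
    antitoneOn_discreteTV_of_ftl hv_anti hℓ hpos hode hlast hs (hs.trans hst) hst

/-- BV contraction: the discrete total variation
`T(t) = R₁(t) + R_{n-2}(t) + Σ_{i=1}^{n-3} |Rᵢ(t) - R_{i+1}(t)|`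
is non-increasing along the discrete density ODE system. -/
theorem ftl_discrete_BV_contraction
    (v : ℝ → ℝ) (hv : ContDiffOn ℝ 1 v (Set.Ici 0))
    (hv' : ∀ ρ : ℝ, 0 < ρ → deriv v ρ < 0)
    (ℓ : ℝ) (hℓ : 0 < ℓ) (n : ℕ) (hn : 3 ≤ n)
    (Rd : ℕ → ℝ → ℝ)
    (hpos : ∀ t ≥ (0:ℝ), ∀ i, 1 ≤ i → i ≤ n - 2 → 0 < Rd i t)
    (hC1 : ∀ i, 1 ≤ i → i ≤ n - 2 → ContDiff ℝ 1 (Rd i))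
    (hode : ∀ t ≥ (0:ℝ), ∀ i, 1 ≤ i → i ≤ n - 3 →
      HasDerivAt (Rd i) (-(Rd i t)^2 / ℓ * (v (Rd (i+1) t) - v (Rd i t))) t)
    (hlast : ∀ t ≥ (0:ℝ),
      HasDerivAt (Rd (n-2)) (-(Rd (n-2) t)^2 / ℓ * (v 0 - v (Rd (n-2) t))) t)
    (T : ℝ → ℝ)
    (hT : ∀ t, T t = Rd 1 t + Rd (n-2) t
      + ∑ i ∈ Finset.Icc 1 (n-3), |Rd i t - Rd (i+1) t|) :
    ∀ s t : ℝ, 0 ≤ s → s ≤ t → T t ≤ T s :=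
  ftl_discrete_BV_contraction_general v hv hv' ℓ hℓ n hn Rd hpos hode hlast T hT

end
end

section
/- Assume v : ℝ≥0 → ℝ is C¹ with v' < 0 on (0,∞) and ρ ↦ ρ v'(ρ) non-increasing on ℝ≥0. Let x₁ < ... < x_{n−1} solve the follow-the-leader system with ẋᵢ = v(ℓ/(x_{i+1}−xᵢ)) for i ≤ n−2 and ẋ_{n−1} = v(0). Then for all t > 0 and all i ∈ {1,...,n−2}: (ẋ_{i+1}(t) − ẋᵢ(t))/(x_{i+1}(t) − xᵢ(t)) ≤ 1/t (discrete Oleinik inequality). -/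
/-!
Write `y = x_{i+1} - x_i` for a gap, `R = ℓ / y` for its density and `z = ẏ / y`. Along the flow
`d/dt v(R) = -R v'(R) z`, and `z` obeys the Riccati equation `ż = ÿ / y - z²`; so comparison
with `1 / t` gives `z ≤ 1 / t` as soon as `ÿ ≤ 0` wherever `z ≥ 1 / t`. For the pair behind the
leader, `ÿ = R v'(R) z ≤ 0` there. For an interior pair, `ÿ = m_{i+1} z_{i+1} - m_i z_i` with
`m = -R v'(R) ≥ 0`; by descending induction `z_{i+1} ≤ 1 / t ≤ z_i`, and `z_i > 0` forces
`R_{i+1} ≤ R_i`, hence `m_{i+1} ≤ m_i` because `ρ ↦ ρ v'(ρ)` is non-increasing.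
-/

open Set Filter Topology

theorem le_one_div_of_riccati {z z' : ℝ → ℝ} (hz : ∀ t > 0, HasDerivAt z (z' t) t)
    (hz0 : ContinuousWithinAt z (Ioi 0) 0) (hz' : ∀ t > 0, 1 / t ≤ z t → z' t ≤ -z t ^ 2)
    {t : ℝ} (ht : 0 < t) : z t ≤ 1 / t := by
  -- `s ↦ s * z s` starts at `0` and cannot cross the level `1 + c`: there `z = (1 + c) / s`,
  -- so its derivative `z + s z' ≤ z (1 - s z) = -c z` is negative.
  set g : ℝ → ℝ := fun s => s * z s
  have hg : ∀ s > 0, HasDerivAt g (z s + s * z' s) s := fun s hs =>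
    ((hasDerivAt_id' s).mul (hz s hs)).congr_deriv (by ring)
  have hg0 : ∀ᶠ s in 𝓝[>] 0, g s < 1 := by
    have : Tendsto g (𝓝[>] 0) (𝓝 (0 * z 0)) :=
      (continuousWithinAt_id.mul hz0).tendsto
    exact this.eventually (gt_mem_nhds (by simp))
  obtain ⟨ε, hgε, hε, hεt⟩ := (hg0.and (Ioo_mem_nhdsGT ht)).exists
  suffices g t ≤ 1 by rwa [le_div_iff₀ ht, mul_comm]
  refine le_of_forall_pos_le_add fun c hc => ?_
  refine image_le_of_deriv_right_lt_deriv_boundary' (f' := fun s => z s + s * z' s)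
    (B' := fun _ => 0) (fun s hs => (hg s (hε.trans_le hs.1)).continuousAt.continuousWithinAt)
    (fun s hs => (hg s (hε.trans_le hs.1)).hasDerivWithinAt) (by linarith) continuousOn_const
    (fun s _ => hasDerivWithinAt_const _ _ _) ?_ ⟨hεt.le, le_rfl⟩
  intro s hs hgs
  have hs0 : 0 < s := hε.trans_le hs.1
  have hzs : z s = (1 + c) / s := by rw [eq_div_iff hs0.ne', mul_comm]; exact hgs
  have hzpos : 0 < z s := by rw [hzs]; positivity
  have hz's := hz' s hs0 (by rw [hzs]; gcongr; linarith)
  calc z s + s * z' s ≤ z s + s * -z s ^ 2 := by gcongr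
    _ = -c * z s := by rw [hzs]; field_simp; ring
    _ < 0 := by nlinarith

theorem div_le_one_div_of_second_deriv_nonpos {y y' y'' : ℝ → ℝ} (hy : ∀ t ≥ 0, 0 < y t)
    (hy' : ∀ t ≥ 0, HasDerivAt y (y' t) t) (hy'' : ∀ t > 0, HasDerivAt y' (y'' t) t)
    (hy'0 : ContinuousAt y' 0) (hy''_nonpos : ∀ t > 0, 1 / t ≤ y' t / y t → y'' t ≤ 0)
    {t : ℝ} (ht : 0 < t) : y' t / y t ≤ 1 / t := by
  refine le_one_div_of_riccati (z := fun s => y' s / y s)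
    (fun s hs => (hy'' s hs).div (hy' s hs.le) (hy s hs.le).ne')
    (hy'0.div (hy' 0 le_rfl).continuousAt (hy 0 le_rfl).ne').continuousWithinAt
    (fun s hs hzs => ?_) ht
  have hys := hy s hs.le
  have := hy''_nonpos s hs hzs
  calc (y'' s * y s - y' s * y' s) / y s ^ 2 ≤ (0 - y' s * y' s) / y s ^ 2 := by
        gcongr; nlinarith
    _ = -(y' s / y s) ^ 2 := by ring

section FollowTheLeader

variable {v : ℝ → ℝ} {ℓ : ℝ}

theorem hasDerivAt_comp_const_div {y : ℝ → ℝ} {y' t : ℝ}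
    (hv : DifferentiableAt ℝ v (ℓ / y t)) (hy : HasDerivAt y y' t) (hyt : y t ≠ 0) :
    HasDerivAt (fun s => v (ℓ / y s)) (-(ℓ / y t * deriv v (ℓ / y t)) * (y' / y t)) t :=
  (hv.hasDerivAt.comp t ((hasDerivAt_const t ℓ).div hy hyt)).congr_deriv (by field_simp; ring)

theorem ftl_follower_oleinik (hv : ∀ ρ > 0, DifferentiableAt ℝ v ρ) (hℓ : 0 < ℓ)
    {a b w W : ℝ → ℝ} (hab : ∀ t ≥ 0, a t < b t)
    (ha : ∀ t ≥ 0, HasDerivAt a (v (ℓ / (b t - a t))) t) (hb : ∀ t ≥ 0, HasDerivAt b (w t) t)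
    (hw : ∀ t > 0, HasDerivAt w (W t) t) (hw0 : ContinuousAt w 0)
    (hW : ∀ t > 0, 1 / t ≤ (w t - v (ℓ / (b t - a t))) / (b t - a t) →
      W t ≤ -(ℓ / (b t - a t) * deriv v (ℓ / (b t - a t))) *
        ((w t - v (ℓ / (b t - a t))) / (b t - a t)))
    {t : ℝ} (ht : 0 < t) : (w t - v (ℓ / (b t - a t))) / (b t - a t) ≤ 1 / t := by
  have hgap : ∀ t ≥ 0, 0 < b t - a t := fun t ht => sub_pos.2 (hab t ht)
  have hgap' : ∀ t ≥ 0, HasDerivAt (fun s => b s - a s) (w t - v (ℓ / (b t - a t))) t :=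
    fun t ht => (hb t ht).sub (ha t ht)
  have hvR : ∀ t ≥ 0, DifferentiableAt ℝ v (ℓ / (b t - a t)) :=
    fun t ht => hv _ (div_pos hℓ (hgap t ht))
  refine div_le_one_div_of_second_deriv_nonpos hgap hgap'
    (fun s hs => (hw s hs).sub (hasDerivAt_comp_const_div (hvR s hs.le) (hgap' s hs.le)
      (hgap s hs.le).ne'))
    (hw0.sub (hasDerivAt_comp_const_div (y := fun s => b s - a s) (hvR 0 le_rfl) (hgap' 0 le_rfl)
      (hgap 0 le_rfl).ne').continuousAt)
    (fun s hs hzs => sub_nonpos.2 ?_) ht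
  linarith [hW s hs hzs]

theorem ftl_leader_oleinik (hv : ∀ ρ > 0, DifferentiableAt ℝ v ρ)
    (hv' : ∀ ρ > 0, deriv v ρ ≤ 0) (hℓ : 0 < ℓ) {a b : ℝ → ℝ} {V : ℝ}
    (hab : ∀ t ≥ 0, a t < b t) (ha : ∀ t ≥ 0, HasDerivAt a (v (ℓ / (b t - a t))) t)
    (hb : ∀ t ≥ 0, HasDerivAt b V t) {t : ℝ} (ht : 0 < t) :
    (V - v (ℓ / (b t - a t))) / (b t - a t) ≤ 1 / t := by
  refine ftl_follower_oleinik hv hℓ hab ha hb (fun s _ => hasDerivAt_const s V)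
    continuousAt_const (fun s hs hzs => ?_) ht
  have hR : 0 < ℓ / (b s - a s) := div_pos hℓ (sub_pos.2 (hab s hs.le))
  have : 0 ≤ -(ℓ / (b s - a s) * deriv v (ℓ / (b s - a s))) := by
    nlinarith [hv' _ hR]
  exact mul_nonneg this (le_trans (by positivity) hzs)

theorem ftl_interior_oleinik (hv : ∀ ρ > 0, DifferentiableAt ℝ v ρ)
    (hv' : ∀ ρ > 0, deriv v ρ ≤ 0) (hv2 : AntitoneOn (fun ρ => ρ * deriv v ρ) (Ioi 0))
    (hℓ : 0 < ℓ) {a b c w : ℝ → ℝ} (hab : ∀ t ≥ 0, a t < b t) (hbc : ∀ t ≥ 0, b t < c t)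
    (ha : ∀ t ≥ 0, HasDerivAt a (v (ℓ / (b t - a t))) t)
    (hb : ∀ t ≥ 0, HasDerivAt b (v (ℓ / (c t - b t))) t) (hc : ∀ t ≥ 0, HasDerivAt c (w t) t)
    (hbc_oleinik : ∀ t > 0, (w t - v (ℓ / (c t - b t))) / (c t - b t) ≤ 1 / t)
    {t : ℝ} (ht : 0 < t) :
    (v (ℓ / (c t - b t)) - v (ℓ / (b t - a t))) / (b t - a t) ≤ 1 / t := by
  have hv_anti : AntitoneOn v (Ioi 0) :=
    antitoneOn_of_deriv_nonpos (convex_Ioi 0)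
      (fun ρ hρ => (hv ρ hρ).continuousAt.continuousWithinAt)
      (fun ρ hρ => (hv ρ (by simpa using hρ)).differentiableWithinAt)
      (fun ρ hρ => hv' ρ (by simpa using hρ))
  have hgap : ∀ t ≥ 0, 0 < c t - b t := fun t ht => sub_pos.2 (hbc t ht)
  have hgap' : ∀ t ≥ 0, HasDerivAt (fun s => c s - b s) (w t - v (ℓ / (c t - b t))) t :=
    fun t ht => (hc t ht).sub (hb t ht)
  have hvR : ∀ t ≥ 0, DifferentiableAt ℝ v (ℓ / (c t - b t)) :=
    fun t ht => hv _ (div_pos hℓ (hgap t ht))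
  refine ftl_follower_oleinik hv hℓ hab ha hb
    (fun s hs => hasDerivAt_comp_const_div (hvR s hs.le) (hgap' s hs.le) (hgap s hs.le).ne')
    (hasDerivAt_comp_const_div (y := fun s => c s - b s) (hvR 0 le_rfl) (hgap' 0 le_rfl)
      (hgap 0 le_rfl).ne').continuousAt
    (fun s hs hzs => ?_) ht
  set R := ℓ / (b s - a s)
  set R' := ℓ / (c s - b s)
  have hR : 0 < R := div_pos hℓ (sub_pos.2 (hab s hs.le))
  have hR' : 0 < R' := div_pos hℓ (hgap s hs.le)
  -- `b` outruns `a` (their slope is at least `1 / s > 0`), so `b` sees the lower density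
  have hRR' : R' ≤ R := by
    by_contra! h
    have : (v R' - v R) / (b s - a s) ≤ 0 :=
      div_nonpos_of_nonpos_of_nonneg (sub_nonpos.2 (hv_anti hR hR' h.le))
        (sub_pos.2 (hab s hs.le)).le
    linarith [one_div_pos.2 hs]
  have hm_le : -(R' * deriv v R') ≤ -(R * deriv v R) := neg_le_neg (hv2 hR' hR hRR')
  have hm' : 0 ≤ -(R' * deriv v R') := by nlinarith [hv' R' hR']
  calc -(R' * deriv v R') * ((w s - v R') / (c s - b s))
      ≤ -(R' * deriv v R') * (1 / s) := mul_le_mul_of_nonneg_left (hbc_oleinik s hs) hm'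
    _ ≤ -(R * deriv v R) * (1 / s) := mul_le_mul_of_nonneg_right hm_le (by positivity)
    _ ≤ -(R * deriv v R) * ((v R' - v R) / (b s - a s)) :=
        mul_le_mul_of_nonneg_left hzs (hm'.trans hm_le)

end FollowTheLeader

theorem ftl_discrete_oleinik_general
    (v : ℝ → ℝ) (hv : ContDiffOn ℝ 1 v (Set.Ici 0))
    (hv' : ∀ ρ : ℝ, 0 < ρ → deriv v ρ < 0)
    (hv2 : AntitoneOn (fun ρ => ρ * deriv v ρ) (Set.Ici 0))
    (ℓ : ℝ) (hℓ : 0 < ℓ) (n : ℕ)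
    (x : ℕ → ℝ → ℝ)
    (horder : ∀ t ≥ (0:ℝ), ∀ i, 1 ≤ i → i ≤ n - 2 → x i t < x (i+1) t)
    (hode : ∀ t ≥ (0:ℝ), ∀ i, 1 ≤ i → i ≤ n - 2 →
      HasDerivAt (x i) (v (ℓ / (x (i+1) t - x i t))) t)
    (hlead : ∀ t ≥ (0:ℝ), HasDerivAt (x (n-1)) (v 0) t) :
    ∀ t : ℝ, 0 < t → ∀ i, 1 ≤ i → i ≤ n - 2 →
      (deriv (x (i+1)) t - deriv (x i) t) / (x (i+1) t - x i t) ≤ 1 / t := by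
  have hvd : ∀ ρ > 0, DifferentiableAt ℝ v ρ := fun ρ hρ =>
    (hv.differentiableOn one_ne_zero).differentiableAt (Ici_mem_nhds hρ)
  have hv'' : ∀ ρ > 0, deriv v ρ ≤ 0 := fun ρ hρ => (hv' ρ hρ).le
  have hvel : ∀ t ≥ (0:ℝ), ∀ i, 1 ≤ i → i ≤ n - 2 →
      deriv (x i) t = v (ℓ / (x (i+1) t - x i t)) := fun t ht i h1 h2 => (hode t ht i h1 h2).deriv
  have hdiff : ∀ t ≥ (0:ℝ), ∀ j, 1 ≤ j → j ≤ n - 1 → HasDerivAt (x j) (deriv (x j) t) t := by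
    intro t ht j h1 h2
    rcases h2.lt_or_eq with h2 | rfl
    · exact (hode t ht j h1 (by omega)).differentiableAt.hasDerivAt
    · exact (hlead t ht).differentiableAt.hasDerivAt
  suffices ∀ i ≤ n - 2, 1 ≤ i → ∀ t > 0,
      (deriv (x (i+1)) t - deriv (x i) t) / (x (i+1) t - x i t) ≤ 1 / t from
    fun t ht i h1 h2 => this i h2 h1 t ht
  intro i hi
  induction hi using Nat.decreasingInduction with
  | self =>
    intro h1 t ht
    obtain ⟨m, rfl⟩ : ∃ m, n = m + 2 := ⟨n - 2, by omega⟩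
    simp only [Nat.add_sub_cancel, show m + 2 - 1 = m + 1 by omega] at *
    rw [hvel t ht.le m h1 le_rfl, (hlead t ht.le).deriv]
    exact ftl_leader_oleinik hvd hv'' hℓ (horder · · m h1 le_rfl) (hode · · m h1 le_rfl) hlead ht
  | of_succ i hi ih =>
    intro h1 t ht
    rw [hvel t ht.le (i+1) (by omega) hi, hvel t ht.le i h1 hi.le]
    refine ftl_interior_oleinik hvd hv'' (hv2.mono Ioi_subset_Ici_self) hℓ
      (horder · · i h1 hi.le) (horder · · (i+1) (by omega) hi) (hode · · i h1 hi.le)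
      (hode · · (i+1) (by omega) hi) (hdiff · · (i+2) (by omega) (by omega)) (fun s hs => ?_) ht
    rw [← hvel s hs.le (i+1) (by omega) hi]
    exact ih (by omega) s hs

/-- Discrete Oleinik inequality for the follow-the-leader system:
`(ẋ_{i+1}(t) - ẋᵢ(t))/(x_{i+1}(t) - xᵢ(t)) ≤ 1/t` for all `t > 0`. -/
theorem ftl_discrete_oleinik
    (v : ℝ → ℝ) (hv : ContDiffOn ℝ 1 v (Set.Ici 0))
    (hv' : ∀ ρ : ℝ, 0 < ρ → deriv v ρ < 0)
    (hv2 : AntitoneOn (fun ρ => ρ * deriv v ρ) (Set.Ici 0))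
    (ℓ : ℝ) (hℓ : 0 < ℓ) (n : ℕ) (hn : 3 ≤ n)
    (x : ℕ → ℝ → ℝ)
    (horder : ∀ t ≥ (0:ℝ), ∀ i, 1 ≤ i → i ≤ n - 2 → x i t < x (i+1) t)
    (hode : ∀ t ≥ (0:ℝ), ∀ i, 1 ≤ i → i ≤ n - 2 →
      HasDerivAt (x i) (v (ℓ / (x (i+1) t - x i t))) t)
    (hlead : ∀ t ≥ (0:ℝ), HasDerivAt (x (n-1)) (v 0) t) :
    ∀ t : ℝ, 0 < t → ∀ i, 1 ≤ i → i ≤ n - 2 →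
      (deriv (x (i+1)) t - deriv (x i) t) / (x (i+1) t - x i t) ≤ 1 / t :=
  ftl_discrete_oleinik_general v hv hv' hv2 ℓ hℓ n x horder hode hlead
end

section
/- Assume v : ℝ≥0 → ℝ is C¹ with v' < 0 on (0,∞) and ρ v'(ρ) non-increasing. Let R(t) > 0 solve Ṙ = −(R²/ℓ)[v_max − v(R)] where v_max = v(0). Define z(t) = t · R(t) · [v_max − v(R(t))]. Then z(0) = 0 and z(t) ≤ ℓ for all t ≥ 0. -/
/-!
Along the flow, `w(t) = ℓ / R(t) - t (v_max - v(R(t))) = (ℓ - z(t)) / R(t)` is nondecreasing: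
the `v_max - v(R)` produced by differentiating `ℓ / R` cancels the one from the product rule on
`t (v_max - v(R))`, leaving `ẇ = -t v'(R) R² (v_max - v(R)) / ℓ ≥ 0`. Hence
`w(t) ≥ w(0) = ℓ / R(0) > 0`, i.e. `z(t) < ℓ`.
-/

open Set

lemma monotoneOn_Ici_of_hasDerivAt_nonneg {f f' : ℝ → ℝ} {a : ℝ}
    (hf : ∀ x ∈ Ici a, HasDerivAt f (f' x) x) (hf' : ∀ x ∈ Ici a, 0 ≤ f' x) :
    MonotoneOn f (Ici a) :=
  monotoneOn_of_hasDerivWithinAt_nonneg (convex_Ici a)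
    (fun x hx => (hf x hx).continuousAt.continuousWithinAt)
    (fun x hx => (hf x (interior_subset hx)).hasDerivWithinAt)
    (fun x hx => hf' x (interior_subset hx))

lemma hasDerivAt_div_sub_mul_of_hasDerivAt {v R : ℝ → ℝ} {ℓ c v' t : ℝ} (hℓ : ℓ ≠ 0)
    (hR : R t ≠ 0) (hode : HasDerivAt R (-(R t) ^ 2 / ℓ * (c - v (R t))) t)
    (hv : HasDerivAt v v' (R t)) :
    HasDerivAt (fun s => ℓ / R s - s * (c - v (R s)))
      (t * -v' * R t ^ 2 * (c - v (R t)) / ℓ) t := by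
  refine (((hasDerivAt_const t ℓ).div hode hR).sub
    ((hasDerivAt_id' t).mul ((hasDerivAt_const t c).sub (hv.comp t hode)))).congr_deriv ?_
  simp only [Pi.sub_apply, Function.comp_apply]
  field_simp
  ring

theorem ftl_oleinik_base_case_general
    (v : ℝ → ℝ) (hv : ContDiffOn ℝ 1 v (Set.Ici 0))
    (hv' : ∀ ρ : ℝ, 0 < ρ → deriv v ρ < 0)
    (ℓ : ℝ) (hℓ : 0 < ℓ)
    (R : ℝ → ℝ) (hpos : ∀ t ≥ (0:ℝ), 0 < R t)
    (hode : ∀ t ≥ (0:ℝ), HasDerivAt R (-(R t)^2 / ℓ * (v 0 - v (R t))) t)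
    (z : ℝ → ℝ) (hz : ∀ t, z t = t * R t * (v 0 - v (R t))) :
    z 0 = 0 ∧ ∀ t ≥ (0:ℝ), z t ≤ ℓ := by
  refine ⟨by simp [hz], fun t ht => ?_⟩
  have hdiff : ∀ ρ > (0:ℝ), HasDerivAt v (deriv v ρ) ρ := fun ρ hρ =>
    ((hv.differentiableOn one_ne_zero).differentiableAt (Ici_mem_nhds hρ)).hasDerivAt
  have hanti : AntitoneOn v (Ici 0) :=
    antitoneOn_of_deriv_nonpos (convex_Ici 0) hv.continuousOn
      (fun ρ hρ => (hdiff ρ (by simpa using hρ)).differentiableAt.differentiableWithinAt)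
      (fun ρ hρ => (hv' ρ (by simpa using hρ)).le)
  have hgap : ∀ s ≥ (0:ℝ), 0 ≤ v 0 - v (R s) := fun s hs =>
    sub_nonneg.2 (hanti self_mem_Ici (hpos s hs).le (hpos s hs).le)
  have hmono : MonotoneOn (fun s => ℓ / R s - s * (v 0 - v (R s))) (Ici 0) :=
    monotoneOn_Ici_of_hasDerivAt_nonneg (fun s hs =>
      hasDerivAt_div_sub_mul_of_hasDerivAt hℓ.ne' (hpos s hs).ne' (hode s hs)
        (hdiff _ (hpos s hs))) (fun s (hs : 0 ≤ s) =>
      div_nonneg (mul_nonneg (mul_nonneg (mul_nonneg hs (neg_nonneg.2 (hv' _ (hpos s hs)).le))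
        (sq_nonneg _)) (hgap s hs)) hℓ.le)
  have hw : ℓ / R 0 ≤ ℓ / R t - t * (v 0 - v (R t)) := by
    simpa using hmono self_mem_Ici ht ht
  rw [hz, mul_right_comm, ← le_div_iff₀ (hpos t ht)]
  linarith [div_pos hℓ (hpos 0 le_rfl)]

/-- Base case of the discrete Oleinik estimate: for the leading density `R` solving
`Ṙ = -(R²/ℓ)[v_max - v(R)]` with `v_max = v(0)`, the quantity
`z(t) = t · R(t) · [v_max - v(R(t))]` satisfies `z(0) = 0` and `z(t) ≤ ℓ` for `t ≥ 0`. -/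
theorem ftl_oleinik_base_case
    (v : ℝ → ℝ) (hv : ContDiffOn ℝ 1 v (Set.Ici 0))
    (hv' : ∀ ρ : ℝ, 0 < ρ → deriv v ρ < 0)
    (hv2 : AntitoneOn (fun ρ => ρ * deriv v ρ) (Set.Ici 0))
    (ℓ : ℝ) (hℓ : 0 < ℓ)
    (R : ℝ → ℝ) (hpos : ∀ t ≥ (0:ℝ), 0 < R t)
    (hode : ∀ t ≥ (0:ℝ), HasDerivAt R (-(R t)^2 / ℓ * (v 0 - v (R t))) t)
    (z : ℝ → ℝ) (hz : ∀ t, z t = t * R t * (v 0 - v (R t))) :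
    z 0 = 0 ∧ ∀ t ≥ (0:ℝ), z t ≤ ℓ :=
  ftl_oleinik_base_case_general v hv hv' ℓ hℓ R hpos hode z hz
end

section
/- Assume v : ℝ≥0 → ℝ is C¹ with v' < 0 on (0,∞) and ρ v'(ρ) non-increasing on ℝ≥0. Let Rᵢ(t), R_{i+1}(t) > 0 be C¹ functions with Ṙᵢ = −(Rᵢ²/ℓ)[v(R_{i+1}) − v(Rᵢ)], and suppose R_{i+1} satisfies z_{i+1}(t) := t R_{i+1}(t)[ẋ_{i+2}(t) − ẋ_{i+1}(t)] ≤ ℓ for all t ≥ 0, where ẋ_{j+1} − ẋ_j is the velocity difference appearing in the dynamics. Then zᵢ(t) := t Rᵢ(t)[v(R_{i+1}(t)) − v(Rᵢ(t))] ≤ ℓ for all t ≥ 0. -/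
/-!
Along the flow, `z(t) = t Rᵢ(t) D(t)` with `D = v(R_{i+1}) - v(Rᵢ)` starts at `z(0) = 0`, and
wherever `z ≥ ℓ` its derivative splits into four nonpositive terms: `Rᵢ D (1 - z/ℓ)`, nonpositive
multiples of `ℓ - z_{i+1}` and of `z - ℓ`, and `Rᵢ (Rᵢ v'(Rᵢ) - R_{i+1} v'(R_{i+1}))`. The last
one is nonpositive because `z > 0` forces `D > 0`, hence `R_{i+1} < Rᵢ` as `v` decreases, and
`ρ v'(ρ)` is antitone. A barrier argument then keeps `z` below `ℓ`.
-/

open Set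

theorem le_of_hasDerivAt_nonpos_of_lt {f f' : ℝ → ℝ} {a c : ℝ}
    (hf : ∀ x ≥ a, HasDerivAt f (f' x) x) (ha : f a ≤ c)
    (bound : ∀ x > a, c < f x → f' x ≤ 0) : ∀ x ≥ a, f x ≤ c := by
  intro x hx
  refine le_of_forall_pos_le_add fun ε hε => ?_
  -- `f` can only touch the barrier `c + δ (y - a + 1)` where `c < f`, hence where `f' ≤ 0 < δ`
  set δ := ε / (x - a + 1)
  have hδ : 0 < δ := div_pos hε (by linarith)
  have hbarrier : ∀ y ∈ Icc a x, f y ≤ c + δ * (y - a + 1) := by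
    refine image_le_of_deriv_right_lt_deriv_boundary (f' := f')
      (B := fun y => c + δ * (y - a + 1)) (B' := fun _ => δ)
      (fun y hy => (hf y hy.1).continuousAt.continuousWithinAt)
      (fun y hy => (hf y hy.1).hasDerivWithinAt) (by linarith)
      (fun y => ?_) (fun y hy hfy => ?_)
    · simpa using ((hasDerivAt_id y).sub_const a |>.add_const 1 |>.const_mul δ).const_add c
    · rcases hy.1.eq_or_lt with rfl | hay
      · nlinarith
      · exact (bound y hay (by nlinarith [hy.1])).trans_lt hδ
  calc f x ≤ c + δ * (x - a + 1) := hbarrier x ⟨hx, le_rfl⟩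
    _ = c + ε := by rw [div_mul_cancel₀ _ (by linarith)]

theorem oleinik_deriv_nonpos_of_mul_le_mul {ℓ t a b D dva dvb W : ℝ} (hℓ : 0 < ℓ) (ha : 0 < a)
    (hb : 0 ≤ b) (hD : 0 ≤ D) (hz : ℓ ≤ t * a * D) (hw : t * b * W ≤ ℓ) (hdvb : dvb ≤ 0)
    (hmon : a * dva ≤ b * dvb) :
    (a + t * (-a ^ 2 / ℓ * D)) * D + t * a * (dvb * (-b ^ 2 / ℓ * W) - dva * (-a ^ 2 / ℓ * D))
      ≤ 0 := by
  have hdva : dva ≤ 0 :=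
    nonpos_of_mul_nonpos_right (hmon.trans (mul_nonpos_of_nonneg_of_nonpos hb hdvb)) ha
  have hdecomp : (a + t * (-a ^ 2 / ℓ * D)) * D
      + t * a * (dvb * (-b ^ 2 / ℓ * W) - dva * (-a ^ 2 / ℓ * D))
      = a * D * (1 - t * a * D / ℓ) + a * b * dvb / ℓ * (ℓ - t * b * W)
        + a ^ 2 * dva / ℓ * (t * a * D - ℓ) + a * (a * dva - b * dvb) := by
    field_simp
    ring
  have h₁ : a * D * (1 - t * a * D / ℓ) ≤ 0 :=
    mul_nonpos_of_nonneg_of_nonpos (by positivity) (by rw [sub_nonpos, one_le_div hℓ]; exact hz)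
  have h₂ : a * b * dvb / ℓ * (ℓ - t * b * W) ≤ 0 :=
    mul_nonpos_of_nonpos_of_nonneg
      (div_nonpos_of_nonpos_of_nonneg (mul_nonpos_of_nonneg_of_nonpos (by positivity) hdvb) hℓ.le)
      (by linarith)
  have h₃ : a ^ 2 * dva / ℓ * (t * a * D - ℓ) ≤ 0 :=
    mul_nonpos_of_nonpos_of_nonneg
      (div_nonpos_of_nonpos_of_nonneg (mul_nonpos_of_nonneg_of_nonpos (by positivity) hdva) hℓ.le)
      (by linarith)
  have h₄ : a * (a * dva - b * dvb) ≤ 0 := mul_nonpos_of_nonneg_of_nonpos ha.le (by linarith)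
  linarith

section

variable {v : ℝ → ℝ} (hv' : ∀ ρ : ℝ, 0 < ρ → deriv v ρ < 0)
include hv'

-- `deriv` vanishes where `v` is not differentiable.
theorem hasDerivAt_of_deriv_neg {ρ : ℝ} (hρ : 0 < ρ) : HasDerivAt v (deriv v ρ) ρ :=
  (differentiableAt_of_deriv_ne_zero (hv' ρ hρ).ne).hasDerivAt

theorem strictAntiOn_Ioi_of_deriv_neg : StrictAntiOn v (Ioi 0) :=
  strictAntiOn_of_deriv_neg (convex_Ioi 0)
    (fun _ hρ => (hasDerivAt_of_deriv_neg hv' hρ).continuousAt.continuousWithinAt)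
    fun ρ hρ => hv' ρ (by rwa [interior_Ioi] at hρ)

theorem oleinik_deriv_nonpos (hv2 : AntitoneOn (fun ρ => ρ * deriv v ρ) (Ici 0))
    {ℓ t a b W : ℝ} (hℓ : 0 < ℓ) (ht : 0 ≤ t) (ha : 0 < a) (hb : 0 < b)
    (hz : ℓ ≤ t * a * (v b - v a)) (hw : t * b * W ≤ ℓ) :
    (a + t * (-a ^ 2 / ℓ * (v b - v a))) * (v b - v a)
      + t * a * (deriv v b * (-b ^ 2 / ℓ * W) - deriv v a * (-a ^ 2 / ℓ * (v b - v a))) ≤ 0 := by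
  have hD : 0 < v b - v a := by
    by_contra! hD
    nlinarith [mul_nonneg ht ha.le]
  have hba : b ≤ a := by
    by_contra! hab
    linarith [strictAntiOn_Ioi_of_deriv_neg hv' ha hb hab]
  exact oleinik_deriv_nonpos_of_mul_le_mul hℓ ha hb.le hD.le hz hw (hv' b hb).le
    (hv2 (mem_Ici.2 hb.le) (mem_Ici.2 ha.le) hba)

end

theorem ftl_oleinik_inductive_step_general
    (v : ℝ → ℝ)
    (hv' : ∀ ρ : ℝ, 0 < ρ → deriv v ρ < 0)
    (hv2 : AntitoneOn (fun ρ => ρ * deriv v ρ) (Set.Ici 0))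
    (ℓ : ℝ) (hℓ : 0 < ℓ)
    (A B w : ℝ → ℝ)
    (hApos : ∀ t ≥ (0:ℝ), 0 < A t) (hBpos : ∀ t ≥ (0:ℝ), 0 < B t)
    (hAode : ∀ t ≥ (0:ℝ), HasDerivAt A (-(A t)^2 / ℓ * (v (B t) - v (A t))) t)
    (hBode : ∀ t ≥ (0:ℝ), HasDerivAt B (-(B t)^2 / ℓ * w t) t)
    (hznext : ∀ t ≥ (0:ℝ), t * B t * w t ≤ ℓ) :
    ∀ t ≥ (0:ℝ), t * A t * (v (B t) - v (A t)) ≤ ℓ := by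
  have hvB t (ht : 0 ≤ t) := (hasDerivAt_of_deriv_neg hv' (hBpos t ht)).comp t (hBode t ht)
  have hvA t (ht : 0 ≤ t) := (hasDerivAt_of_deriv_neg hv' (hApos t ht)).comp t (hAode t ht)
  refine le_of_hasDerivAt_nonpos_of_lt
    (fun t ht => ((hasDerivAt_id' t).mul (hAode t ht)).mul ((hvB t ht).sub (hvA t ht)))
    (by simpa using hℓ.le) fun t ht hz => ?_
  simpa only [one_mul, Pi.mul_apply] using oleinik_deriv_nonpos hv' hv2 hℓ ht.le (hApos t ht.le)
    (hBpos t ht.le) hz.le (hznext t ht.le)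

/-- Inductive step of the discrete Oleinik estimate: if the quantity
`z_{i+1}(t) = t R_{i+1}(t) (ẋ_{i+2}(t) - ẋ_{i+1}(t))` associated with the next density
stays below `ℓ`, then so does `zᵢ(t) = t Rᵢ(t) [v(R_{i+1}(t)) - v(Rᵢ(t))]`.
Here `A = Rᵢ`, `B = R_{i+1}` and `w(t) = ẋ_{i+2}(t) - ẋ_{i+1}(t)` is the velocity
difference driving `B`, i.e. `Ḃ = -(B²/ℓ) w`. -/
theorem ftl_oleinik_inductive_step
    (v : ℝ → ℝ) (hv : ContDiffOn ℝ 1 v (Set.Ici 0))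
    (hv' : ∀ ρ : ℝ, 0 < ρ → deriv v ρ < 0)
    (hv2 : AntitoneOn (fun ρ => ρ * deriv v ρ) (Set.Ici 0))
    (ℓ : ℝ) (hℓ : 0 < ℓ)
    (A B w : ℝ → ℝ)
    (hApos : ∀ t ≥ (0:ℝ), 0 < A t) (hBpos : ∀ t ≥ (0:ℝ), 0 < B t)
    (hAC1 : ContDiff ℝ 1 A) (hBC1 : ContDiff ℝ 1 B)
    (hAode : ∀ t ≥ (0:ℝ), HasDerivAt A (-(A t)^2 / ℓ * (v (B t) - v (A t))) t)
    (hBode : ∀ t ≥ (0:ℝ), HasDerivAt B (-(B t)^2 / ℓ * w t) t)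
    (hznext : ∀ t ≥ (0:ℝ), t * B t * w t ≤ ℓ) :
    ∀ t ≥ (0:ℝ), t * A t * (v (B t) - v (A t)) ≤ ℓ :=
  ftl_oleinik_inductive_step_general v hv' hv2 ℓ hℓ A B w hApos hBpos hAode hBode hznext
end

section
/- For any probability measure μ on ℝ, the 1-Wasserstein distance W₁(μ,ν) between two probability measures μ, ν equals the L¹([0,1]) distance between their pseudo-inverse functions X_μ(z) = inf{x ∈ ℝ : μ((−∞,x]) > z} and X_ν, and also equals ∫_ℝ |F_μ(x) − F_ν(x)| dx where F_μ, F_ν are the cumulative distribution functions. -/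
open MeasureTheory

/-- The 1-Wasserstein distance between two measures on `ℝ`, defined as the infimum of
transport costs over all couplings. -/
noncomputable def wasserstein1 (μ ν : Measure ℝ) : ℝ :=
  ⨅ γ : {γ : Measure (ℝ × ℝ) // γ.map Prod.fst = μ ∧ γ.map Prod.snd = ν},
    ∫ p : ℝ × ℝ, |p.1 - p.2| ∂(γ : Measure (ℝ × ℝ))

/-- The pseudo-inverse `X_μ(z) = inf {x : μ((-∞,x]) > z}` of the cumulative
distribution function of `μ`. -/
noncomputable def pseudoInverse (μ : Measure ℝ) (z : ℝ) : ℝ :=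
  sInf {x : ℝ | z < (μ (Set.Iic x)).toReal}

/-!
For any coupling `γ` of `μ` and `ν`, Tonelli's theorem gives
`∫ |x - y| dγ = ∫ γ {(x, y) : t lies between x and y} dt`, and the set in the integrand is the
symmetric difference of `{x ≤ t}` and `{y ≤ t}`, whose `γ`-masses are `F_μ t` and `F_ν t`; so the
cost of `γ` is at least `∫ |F_μ - F_ν|`. The quantile coupling, the image of Lebesgue measure on
`(0, 1)` under `z ↦ (X_μ z, X_ν z)`, has marginals `μ` and `ν` because `{z : X_μ z ≤ t}` is
squeezed between `(0, F_μ t)` and `(0, F_μ t]`; for the same reason its symmetric difference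
lies in the interval between `F_μ t` and `F_ν t`, so this coupling attains the bound.
-/

open Set Filter Topology ProbabilityTheory
open scoped symmDiff

section PseudoInverse

variable (μ : Measure ℝ)

lemma bddBelow_lt_cdf {z : ℝ} (hz : 0 < z) : BddBelow {x | z < cdf μ x} := by
  obtain ⟨B, hB⟩ := eventually_atBot.1 ((tendsto_cdf_atBot μ).eventually (gt_mem_nhds hz))
  exact ⟨B, fun x hx => le_of_not_ge fun hxB => (hB x hxB).not_gt hx⟩

lemma nonempty_lt_cdf {z : ℝ} (hz : z < 1) : {x | z < cdf μ x}.Nonempty :=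
  ((tendsto_cdf_atTop μ).eventually (lt_mem_nhds hz)).exists

variable [IsProbabilityMeasure μ]

lemma pseudoInverse_eq_sInf_cdf (z : ℝ) : pseudoInverse μ z = sInf {x | z < cdf μ x} := by
  simp only [pseudoInverse, cdf_eq_real, measureReal_def]

variable {μ}

lemma pseudoInverse_le_of_lt_cdf {z t : ℝ} (hz : 0 < z) (h : z < cdf μ t) :
    pseudoInverse μ z ≤ t := by
  rw [pseudoInverse_eq_sInf_cdf]
  exact csInf_le (bddBelow_lt_cdf μ hz) h

lemma le_cdf_of_pseudoInverse_le {z t : ℝ} (hz : z ∈ Ioo 0 1) (h : pseudoInverse μ z ≤ t) :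
    z ≤ cdf μ t := by
  have hright : Tendsto (cdf μ) (𝓝[>] t) (𝓝 (cdf μ t)) :=
    ((cdf μ).right_continuous t).mono Ioi_subset_Ici_self
  refine ge_of_tendsto hright (eventually_nhdsWithin_of_forall fun x (hx : t < x) => ?_)
  rw [pseudoInverse_eq_sInf_cdf] at h
  obtain ⟨y, hy, hyx⟩ :=
    (csInf_lt_iff (bddBelow_lt_cdf μ hz.1) (nonempty_lt_cdf μ hz.2)).1 (h.trans_lt hx)
  exact hy.le.trans (monotone_cdf μ hyx.le)

lemma Ioo_subset_pseudoInverse_preimage_Iic (t : ℝ) :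
    Ioo 0 (cdf μ t) ⊆ pseudoInverse μ ⁻¹' Iic t ∩ Ioo 0 1 :=
  fun _ hz => ⟨pseudoInverse_le_of_lt_cdf hz.1 hz.2, hz.1, hz.2.trans_le (cdf_le_one μ t)⟩

lemma pseudoInverse_preimage_Iic_subset_Ioc (t : ℝ) :
    pseudoInverse μ ⁻¹' Iic t ∩ Ioo 0 1 ⊆ Ioc 0 (cdf μ t) :=
  fun _ hz => ⟨hz.2.1, le_cdf_of_pseudoInverse_le hz.2 hz.1⟩

lemma volume_pseudoInverse_preimage_Iic (t : ℝ) :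
    volume (pseudoInverse μ ⁻¹' Iic t ∩ Ioo 0 1) = ENNReal.ofReal (cdf μ t) :=
  le_antisymm
    ((measure_mono (pseudoInverse_preimage_Iic_subset_Ioc t)).trans_eq (by simp))
    (le_of_eq_of_le (by simp) (measure_mono (Ioo_subset_pseudoInverse_preimage_Iic t)))

variable (μ)

lemma monotoneOn_pseudoInverse : MonotoneOn (pseudoInverse μ) (Ioo 0 1) := by
  intro a ha b hb hab
  simp only [pseudoInverse_eq_sInf_cdf]
  exact csInf_le_csInf (bddBelow_lt_cdf μ ha.1) (nonempty_lt_cdf μ hb.2)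
    fun x hx => hab.trans_lt hx

lemma aemeasurable_pseudoInverse : AEMeasurable (pseudoInverse μ) (volume.restrict (Ioo 0 1)) :=
  aemeasurable_restrict_of_monotoneOn measurableSet_Ioo (monotoneOn_pseudoInverse μ)

lemma map_pseudoInverse : (volume.restrict (Ioo 0 1)).map (pseudoInverse μ) = μ := by
  refine (Measure.ext_of_Iic μ _ fun t => ?_).symm
  rw [Measure.map_apply_of_aemeasurable (aemeasurable_pseudoInverse μ) measurableSet_Iic,
    Measure.restrict_apply' measurableSet_Ioo, volume_pseudoInverse_preimage_Iic, ofReal_cdf]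

end PseudoInverse

def separatedBy (t : ℝ) : Set (ℝ × ℝ) := (Prod.fst ⁻¹' Iic t) ∆ (Prod.snd ⁻¹' Iic t)

lemma measurableSet_separatedBy (t : ℝ) : MeasurableSet (separatedBy t) :=
  (measurable_fst measurableSet_Iic).symmDiff (measurable_snd measurableSet_Iic)

lemma setOf_mem_separatedBy (p : ℝ × ℝ) :
    {t | p ∈ separatedBy t} = Ico (min p.1 p.2) (max p.1 p.2) := by
  ext t
  simp only [separatedBy, mem_ofPred_eq, mem_symmDiff, mem_preimage, mem_Iic, mem_Ico,
    min_le_iff, lt_max_iff]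
  grind

lemma lintegral_ofReal_abs_sub_eq_lintegral_separatedBy (γ : Measure (ℝ × ℝ)) [SFinite γ] :
    ∫⁻ p, ENNReal.ofReal |p.1 - p.2| ∂γ = ∫⁻ t, γ (separatedBy t) := by
  have hS : MeasurableSet {q : (ℝ × ℝ) × ℝ | q.1 ∈ separatedBy q.2} :=
    (measurableSet_le measurable_fst.fst measurable_snd).symmDiff
      (measurableSet_le measurable_fst.snd measurable_snd)
  have hslice (p : ℝ × ℝ) : ENNReal.ofReal |p.1 - p.2| = volume {t | p ∈ separatedBy t} := by
    rw [setOf_mem_separatedBy, Real.volume_Ico, max_sub_min_eq_abs']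
  calc ∫⁻ p, ENNReal.ofReal |p.1 - p.2| ∂γ = γ.prod volume {q | q.1 ∈ separatedBy q.2} := by
        simp only [Measure.prod_apply hS, hslice]; rfl
    _ = ∫⁻ t, γ (separatedBy t) := Measure.prod_apply_symm hS

lemma ofReal_abs_sub_le_measure_symmDiff {α : Type*} [MeasurableSpace α] (γ : Measure α)
    {s t : Set α} {a b : ℝ} (ha : 0 ≤ a) (hb : 0 ≤ b) (hs : γ s = ENNReal.ofReal a)
    (ht : γ t = ENNReal.ofReal b) : ENNReal.ofReal |a - b| ≤ γ (s ∆ t) := by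
  rw [abs_eq_max_neg, neg_sub, ENNReal.ofReal_max, ENNReal.ofReal_sub _ hb,
    ENNReal.ofReal_sub _ ha, ← hs, ← ht]
  exact max_le le_measure_symmDiff (symmDiff_comm t s ▸ le_measure_symmDiff)

lemma ofReal_abs_cdf_sub_le_measure_separatedBy {μ ν : Measure ℝ} [IsProbabilityMeasure μ]
    [IsProbabilityMeasure ν] {γ : Measure (ℝ × ℝ)} (hγμ : γ.map Prod.fst = μ)
    (hγν : γ.map Prod.snd = ν) (t : ℝ) :
    ENNReal.ofReal |cdf μ t - cdf ν t| ≤ γ (separatedBy t) := by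
  refine ofReal_abs_sub_le_measure_symmDiff γ (cdf_nonneg μ t) (cdf_nonneg ν t) ?_ ?_
  · rw [ofReal_cdf, ← hγμ, Measure.map_apply measurable_fst measurableSet_Iic]
  · rw [ofReal_cdf, ← hγν, Measure.map_apply measurable_snd measurableSet_Iic]

lemma lintegral_ofReal_abs_cdf_sub_le {μ ν : Measure ℝ} [IsProbabilityMeasure μ]
    [IsProbabilityMeasure ν] {γ : Measure (ℝ × ℝ)} [SFinite γ] (hγμ : γ.map Prod.fst = μ)
    (hγν : γ.map Prod.snd = ν) :
    ∫⁻ t, ENNReal.ofReal |cdf μ t - cdf ν t| ≤ ∫⁻ p, ENNReal.ofReal |p.1 - p.2| ∂γ := by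
  rw [lintegral_ofReal_abs_sub_eq_lintegral_separatedBy]
  exact lintegral_mono (ofReal_abs_cdf_sub_le_measure_separatedBy hγμ hγν)

lemma symmDiff_subset_uIcc {S T : Set ℝ} {c a b : ℝ} (hS : Ioo c a ⊆ S) (hS' : S ⊆ Ioc c a)
    (hT : Ioo c b ⊆ T) (hT' : T ⊆ Ioc c b) : S ∆ T ⊆ uIcc a b := by
  rintro z (⟨hzS, hzT⟩ | ⟨hzT, hzS⟩)
  · have hz := hS' hzS
    exact Icc_subset_uIcc' ⟨not_lt.1 fun h => hzT (hT ⟨hz.1, h⟩), hz.2⟩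
  · have hz := hT' hzT
    exact Icc_subset_uIcc ⟨not_lt.1 fun h => hzS (hS ⟨hz.1, h⟩), hz.2⟩

section QuantileCoupling

variable (μ ν : Measure ℝ) [IsProbabilityMeasure μ] [IsProbabilityMeasure ν]

noncomputable def quantileCoupling : Measure (ℝ × ℝ) :=
  (volume.restrict (Ioo 0 1)).map fun z => (pseudoInverse μ z, pseudoInverse ν z)

instance : SFinite (quantileCoupling μ ν) := by
  rw [quantileCoupling]
  infer_instance

lemma aemeasurable_pseudoInverse_prod :
    AEMeasurable (fun z => (pseudoInverse μ z, pseudoInverse ν z)) (volume.restrict (Ioo 0 1)) :=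
  (aemeasurable_pseudoInverse μ).prodMk (aemeasurable_pseudoInverse ν)

lemma map_fst_quantileCoupling : (quantileCoupling μ ν).map Prod.fst = μ := by
  rw [quantileCoupling, AEMeasurable.map_map_of_aemeasurable measurable_fst.aemeasurable
    (aemeasurable_pseudoInverse_prod μ ν)]
  exact map_pseudoInverse μ

lemma map_snd_quantileCoupling : (quantileCoupling μ ν).map Prod.snd = ν := by
  rw [quantileCoupling, AEMeasurable.map_map_of_aemeasurable measurable_snd.aemeasurable
    (aemeasurable_pseudoInverse_prod μ ν)]
  exact map_pseudoInverse ν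

lemma quantileCoupling_separatedBy_le (t : ℝ) :
    quantileCoupling μ ν (separatedBy t) ≤ ENNReal.ofReal |cdf μ t - cdf ν t| := by
  rw [quantileCoupling, Measure.map_apply_of_aemeasurable (aemeasurable_pseudoInverse_prod μ ν)
    (measurableSet_separatedBy t), Measure.restrict_apply' measurableSet_Ioo, abs_sub_comm,
    ← Real.volume_interval]
  refine measure_mono ?_
  rw [separatedBy, preimage_symmDiff, inter_symmDiff_distrib_right]
  exact symmDiff_subset_uIcc (Ioo_subset_pseudoInverse_preimage_Iic t)
    (pseudoInverse_preimage_Iic_subset_Ioc t) (Ioo_subset_pseudoInverse_preimage_Iic t)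
    (pseudoInverse_preimage_Iic_subset_Ioc t)

lemma lintegral_quantileCoupling :
    ∫⁻ p, ENNReal.ofReal |p.1 - p.2| ∂(quantileCoupling μ ν)
      = ∫⁻ t, ENNReal.ofReal |cdf μ t - cdf ν t| := by
  refine le_antisymm ?_ (lintegral_ofReal_abs_cdf_sub_le (map_fst_quantileCoupling μ ν)
    (map_snd_quantileCoupling μ ν))
  rw [lintegral_ofReal_abs_sub_eq_lintegral_separatedBy]
  exact lintegral_mono (quantileCoupling_separatedBy_le μ ν)

lemma integral_quantileCoupling_le {γ : Measure (ℝ × ℝ)} (hγμ : γ.map Prod.fst = μ)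
    (hγν : γ.map Prod.snd = ν) (hγ : Integrable (fun p : ℝ × ℝ => |p.1 - p.2|) γ) :
    ∫ p, |p.1 - p.2| ∂(quantileCoupling μ ν) ≤ ∫ p, |p.1 - p.2| ∂γ := by
  have : IsProbabilityMeasure (γ.map Prod.fst) := hγμ ▸ ‹_›
  have : IsProbabilityMeasure γ := Measure.isProbabilityMeasure_of_map Prod.fst
  have hcost (γ' : Measure (ℝ × ℝ)) : ∫ p, |p.1 - p.2| ∂γ'
      = (∫⁻ p, ENNReal.ofReal |p.1 - p.2| ∂γ').toReal :=
    integral_eq_lintegral_of_nonneg_ae (ae_of_all _ fun _ => abs_nonneg _) (by fun_prop)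
  rw [hcost, hcost, lintegral_quantileCoupling]
  exact ENNReal.toReal_mono hγ.lintegral_lt_top.ne (lintegral_ofReal_abs_cdf_sub_le hγμ hγν)

end QuantileCoupling

lemma integrable_abs_sub_of_map {μ ν : Measure ℝ} {γ : Measure (ℝ × ℝ)}
    (hγμ : γ.map Prod.fst = μ) (hγν : γ.map Prod.snd = ν)
    (hμ : Integrable (fun x : ℝ => |x|) μ) (hν : Integrable (fun x : ℝ => |x|) ν) :
    Integrable (fun p : ℝ × ℝ => |p.1 - p.2|) γ := by
  rw [← hγμ] at hμ
  rw [← hγν] at hν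
  refine ((hμ.comp_measurable measurable_fst).add (hν.comp_measurable measurable_snd)).mono'
    (by fun_prop) (ae_of_all _ fun p => ?_)
  simpa using abs_sub p.1 p.2

lemma wasserstein1_eq_integral_quantileCoupling (μ ν : Measure ℝ) [IsProbabilityMeasure μ]
    [IsProbabilityMeasure ν] (hμ : Integrable (fun x : ℝ => |x|) μ)
    (hν : Integrable (fun x : ℝ => |x|) ν) :
    wasserstein1 μ ν = ∫ p, |p.1 - p.2| ∂(quantileCoupling μ ν) := by
  have hγ₀ := And.intro (map_fst_quantileCoupling μ ν) (map_snd_quantileCoupling μ ν)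
  have : Nonempty {γ : Measure (ℝ × ℝ) // γ.map Prod.fst = μ ∧ γ.map Prod.snd = ν} :=
    ⟨⟨_, hγ₀⟩⟩
  exact ciInf_eq_of_forall_ge_of_forall_gt_exists_lt
    (fun γ => integral_quantileCoupling_le μ ν γ.2.1 γ.2.2
      (integrable_abs_sub_of_map γ.2.1 γ.2.2 hμ hν))
    fun _ hw => ⟨⟨_, hγ₀⟩, hw⟩

/-- On the real line, the 1-Wasserstein distance between probability measures with
finite first moments equals the `L¹([0,1])` distance of the pseudo-inverses of their
CDFs, and also the `L¹(ℝ)` distance of their CDFs. -/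
theorem wasserstein1_eq_pseudoInverse_eq_cdf
    (μ ν : Measure ℝ) [IsProbabilityMeasure μ] [IsProbabilityMeasure ν]
    (hμ : Integrable (fun x : ℝ => |x|) μ) (hν : Integrable (fun x : ℝ => |x|) ν) :
    wasserstein1 μ ν
        = ∫ z in Set.Ioo (0:ℝ) 1, |pseudoInverse μ z - pseudoInverse ν z| ∧
    wasserstein1 μ ν
        = ∫ x : ℝ, |(μ (Set.Iic x)).toReal - (ν (Set.Iic x)).toReal| := by
  rw [wasserstein1_eq_integral_quantileCoupling μ ν hμ hν]
  constructor
  · exact integral_map (aemeasurable_pseudoInverse_prod μ ν) (by fun_prop)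
  · simp only [← measureReal_def, ← cdf_eq_real]
    rw [integral_eq_lintegral_of_nonneg_ae (ae_of_all _ fun _ => abs_nonneg _) (by fun_prop),
      lintegral_quantileCoupling, ← integral_eq_lintegral_of_nonneg_ae
        (ae_of_all _ fun _ => abs_nonneg _)]
    exact ((monotone_cdf μ).measurable.sub (monotone_cdf ν).measurable).abs.aestronglyMeasurable
end

section
/- Let v : ℝ≥0 → ℝ be C¹ with v' < 0 on (0,∞), and let k ≥ 0 and R₀, ..., R_{n−1} > 0 with R₀ = R₁ and R_{n−1} = R_{n−2}. Then k·[Σ_{i=1}^{n−1} (sign(R_{i−1}−k) − sign(Rᵢ−k))(v(Rᵢ)−v(k))φᵢ + (1+sign(R₀−k))(v(k)−v(R₀))φ₀ + (1+sign(R_{n−1}−k))(v(0)−v(k))φₙ] ≥ 0 for any nonnegative weights φ₀, ..., φₙ ≥ 0. -/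
namespace Real

theorem neg_one_le_sign (x : ℝ) : -1 ≤ sign x := by
  rcases sign_apply_eq x with h | h | h <;> rw [h] <;> norm_num

theorem sign_le_one (x : ℝ) : sign x ≤ 1 := by
  rcases sign_apply_eq x with h | h | h <;> rw [h] <;> norm_num

end Real

open Real

/-- If `b` lies below `k` the first factor is `c + 1 ≥ 0` and `f` decreases from `b` to `k`;
above `k` both factors change sign. -/
theorem sub_sign_sub_mul_sub_nonneg_of_antitoneOn {s : Set ℝ} {f : ℝ → ℝ}
    (hf : AntitoneOn f s) {b k : ℝ} (hb : b ∈ s) (hk : k ∈ s) {c : ℝ}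
    (hc₁ : -1 ≤ c) (hc₂ : c ≤ 1) :
    0 ≤ (c - sign (b - k)) * (f b - f k) := by
  rcases lt_trichotomy b k with hbk | rfl | hbk
  · rw [sign_of_neg (sub_neg.mpr hbk)]
    exact mul_nonneg (by linarith) (sub_nonneg.mpr (hf hb hk hbk.le))
  · simp
  · rw [sign_of_pos (sub_pos.mpr hbk)]
    exact mul_nonneg_of_nonpos_of_nonpos (by linarith) (sub_nonpos.mpr (hf hk hb hbk.le))

theorem entropy_sign_inequality_general
    (v : ℝ → ℝ) (hv : ContDiffOn ℝ 1 v (Set.Ici 0))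
    (hv' : ∀ ρ : ℝ, 0 < ρ → deriv v ρ < 0)
    (k : ℝ) (hk : 0 ≤ k)
    (n : ℕ)
    (R : ℕ → ℝ) (hR : ∀ i ≤ n - 1, 0 < R i)
    (φ : ℕ → ℝ) (hφ : ∀ i ≤ n, 0 ≤ φ i) :
    0 ≤ k * ((∑ i ∈ Finset.Icc 1 (n-1),
        (Real.sign (R (i-1) - k) - Real.sign (R i - k)) * (v (R i) - v k) * φ i)
      + (1 + Real.sign (R 0 - k)) * (v k - v (R 0)) * φ 0
      + (1 + Real.sign (R (n-1) - k)) * (v 0 - v k) * φ n) := by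
  have hanti : AntitoneOn v (Set.Ici 0) :=
    (strictAntiOn_of_deriv_neg (convex_Ici 0) hv.continuousOn fun x hx ↦
      hv' x (by rwa [interior_Ici] at hx)).antitoneOn
  have hsum : 0 ≤ ∑ i ∈ Finset.Icc 1 (n-1),
      (sign (R (i-1) - k) - sign (R i - k)) * (v (R i) - v k) * φ i := by
    refine Finset.sum_nonneg fun i hi ↦ mul_nonneg ?_ (hφ i (by grind))
    exact sub_sign_sub_mul_sub_nonneg_of_antitoneOn hanti (hR i (Finset.mem_Icc.mp hi).2).le
      hk (neg_one_le_sign _) (sign_le_one _)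
  have hleft : 0 ≤ (1 + sign (R 0 - k)) * (v k - v (R 0)) :=
    (sub_sign_sub_mul_sub_nonneg_of_antitoneOn (c := -1) hanti (hR 0 (Nat.zero_le _)).le hk
      le_rfl (by norm_num)).trans_eq (by ring)
  have hright : 0 ≤ (1 + sign (R (n-1) - k)) * (v 0 - v k) :=
    mul_nonneg (by linarith [neg_one_le_sign (R (n-1) - k)])
      (sub_nonneg.mpr (hanti Set.self_mem_Ici hk hk))
  apply mul_nonneg hk
  have := mul_nonneg hleft (hφ 0 (Nat.zero_le _))
  have := mul_nonneg hright (hφ n le_rfl)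
  linarith

/-- Key algebraic sign inequality in the proof of the Kružkov entropy inequality for
the particle approximation: with `v` C¹ and strictly decreasing on `(0,∞)`, `k ≥ 0`,
positive densities `R₀,...,R_{n-1}` with `R₀ = R₁` and `R_{n-1} = R_{n-2}`, and
nonnegative weights `φ₀,...,φₙ`, the displayed combination is nonnegative. -/
theorem entropy_sign_inequality
    (v : ℝ → ℝ) (hv : ContDiffOn ℝ 1 v (Set.Ici 0))
    (hv' : ∀ ρ : ℝ, 0 < ρ → deriv v ρ < 0)
    (k : ℝ) (hk : 0 ≤ k)
    (n : ℕ) (hn : 3 ≤ n)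
    (R : ℕ → ℝ) (hR : ∀ i ≤ n - 1, 0 < R i)
    (hR0 : R 0 = R 1) (hRn : R (n-1) = R (n-2))
    (φ : ℕ → ℝ) (hφ : ∀ i ≤ n, 0 ≤ φ i) :
    0 ≤ k * ((∑ i ∈ Finset.Icc 1 (n-1),
        (Real.sign (R (i-1) - k) - Real.sign (R i - k)) * (v (R i) - v k) * φ i)
      + (1 + Real.sign (R 0 - k)) * (v k - v (R 0)) * φ 0
      + (1 + Real.sign (R (n-1) - k)) * (v 0 - v k) * φ n) :=
  entropy_sign_inequality_general v hv hv' k hk n R hR φ hφ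
end
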